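/- Assume that lim_{n→∞} lim_{k→∞} ∏_{l=1}^{k-1}(1−|D_{n+l}|/|D_{n+l+1}|)=1 and that, for each 1≤i≤r, lim_{k→∞} ∑_{l=k+1}^{∞} |D_{i+lr-1}|/|D_{i+lr}|=0, and that (μ_{j+kr-1})_{k≥1} converges weak-* to ν_j for every 1≤j≤r. If μ is an invariant Borel probability measure of (X,σ,G) such that μ(C_{0,j})=ν_i(C_{0,j}) for every 1≤j≤r, where C_{0,j}={x∈X : x(1_G)=j}, then μ=ν_i. -/

import Mathlib

/-!
Fix the symbol `i` and let `M = i + (k + 1) r`, so that `sym M = i`. Off the holes `J M` the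
array `η` is `Γ M`-periodic, and on them it carries the symbol `i`; hence `η` arises from its
`Γ M`-periodic model `η_M` by changing some of the symbols `i` of `η_M`. Counting over the
fundamental domain `D M`, a configuration `x` of the orbit closure `X` sees a cylinder `C` over
a finite window `F` as often as `η_M` does, up to the number of extra symbols `≠ i` that `x`
shows through `F`. Integrating against an invariant measure `ρ` on `X` gives
`|ρ C - μ_M C| ≤ ∑ p ∈ F, (ρ {x p ≠ i} - μ_M {x p ≠ i})`, and in the limit `k → ∞` the same
bound with `ν i` in place of `μ_M`. By invariance the right side depends only on the mass of
`{x 1 = i}`, so it vanishes for `ρ = μ`, and `μ`, `ν i` agree on all cylinders.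
-/

open Pointwise MeasureTheory Filter Topology

/-- The (left) shift action of `G` on `G → A`: `(σ^g x)(h) = x(g⁻¹ h)`. -/
def shift {G A : Type*} [Group G] (g : G) (x : G → A) : G → A := fun h => x (g⁻¹ * h)

/-- `Per(x, Γ, α) = {g ∈ G : x(γ g) = α for all γ ∈ Γ}`. -/
def Per {G A : Type*} [Group G] (x : G → A) (Γ : Subgroup G) (α : A) : Set G :=
  {g : G | ∀ γ ∈ Γ, x (γ * g) = α}

/-- `Per(x, Γ) = ⋃_α Per(x, Γ, α)`. -/
def PerAll {G A : Type*} [Group G] (x : G → A) (Γ : Subgroup G) : Set G :=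
  ⋃ α : A, Per x Γ α

/-- `x` is a Toeplitz array if every `g ∈ G` is periodic for some finite index subgroup. -/
def IsToeplitz {G A : Type*} [Group G] (x : G → A) : Prop :=
  ∀ g : G, ∃ Γ : Subgroup G, Γ.FiniteIndex ∧ g ∈ PerAll x Γ

/-- `D` is a fundamental domain of `G / Γ`: every `g ∈ G` can be written uniquely as
`g = γ u` with `γ ∈ Γ` and `u ∈ D`. -/
def IsFundDomain {G : Type*} [Group G] (Γ : Subgroup G) (D : Finset G) : Prop :=
  ∀ g : G, ∃! p : G × G, p.1 ∈ Γ ∧ p.2 ∈ D ∧ g = p.1 * p.2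

/-- The symbol `α_{m+1} ∈ Σ = {1, …, r}` of the construction: the symbol `j ∈ {1, …, r}` with
`j ≡ m+1 (mod r)`, rendered in `Fin r` (the symbol `i ∈ {1, …, r}` corresponds to `i-1`). -/
def sym {r : ℕ} (hr : 1 < r) (m : ℕ) : Fin r := ⟨m % r, Nat.mod_lt m (by omega)⟩

namespace IsFundDomain

variable {G : Type*} [Group G] {Γ : Subgroup G} {D : Finset G}

/-- The representative in `D` of the coset `Γ g`. -/
noncomputable def rep (hD : IsFundDomain Γ D) (g : G) : G := (hD g).exists.choose.2

lemma rep_mem (hD : IsFundDomain Γ D) (g : G) : hD.rep g ∈ D :=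
  (hD g).exists.choose_spec.2.1

lemma exists_mem_mul_rep (hD : IsFundDomain Γ D) (g : G) : ∃ γ ∈ Γ, γ * hD.rep g = g :=
  ⟨_, (hD g).exists.choose_spec.1, (hD g).exists.choose_spec.2.2.symm⟩

lemma nonempty (hD : IsFundDomain Γ D) : D.Nonempty := ⟨_, hD.rep_mem 1⟩

lemma rep_mul_of_mem (hD : IsFundDomain Γ D) {γ d : G} (hγ : γ ∈ Γ) (hd : d ∈ D) :
    hD.rep (γ * d) = d :=
  congrArg Prod.snd <| (hD (γ * d)).unique (hD (γ * d)).exists.choose_spec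
    (y₂ := (γ, d)) ⟨hγ, hd, rfl⟩

lemma rep_of_mem (hD : IsFundDomain Γ D) {d : G} (hd : d ∈ D) : hD.rep d = d := by
  simpa using hD.rep_mul_of_mem (one_mem Γ) hd

lemma rep_mul_left (hD : IsFundDomain Γ D) {γ : G} (hγ : γ ∈ Γ) (g : G) :
    hD.rep (γ * g) = hD.rep g := by
  obtain ⟨δ, hδ, hδg⟩ := hD.exists_mem_mul_rep g
  rw [← hδg, ← mul_assoc, hD.rep_mul_of_mem (mul_mem hγ hδ) (hD.rep_mem _),
    hD.rep_mul_of_mem hδ (hD.rep_mem _)]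

lemma rep_mul_rep (hD : IsFundDomain Γ D) (hN : Γ.Normal) (a b : G) :
    hD.rep (a * hD.rep b) = hD.rep (a * b) := by
  obtain ⟨δ, hδ, hδb⟩ := hD.exists_mem_mul_rep b
  rw [← hD.rep_mul_left (hN.conj_mem δ hδ a),
    show a * δ * a⁻¹ * (a * hD.rep b) = a * (δ * hD.rep b) by group, hδb]

/-- For normal `Γ`, left multiplication permutes the cosets `Γ \ G`, hence their
representatives. -/
lemma sum_rep_mul {M : Type*} [AddCommMonoid M] (hD : IsFundDomain Γ D) (hN : Γ.Normal)
    (f : G → M) (q : G) : ∑ u ∈ D, f (hD.rep (q * u)) = ∑ u ∈ D, f u :=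
  Finset.sum_nbij' (fun u => hD.rep (q * u)) (fun v => hD.rep (q⁻¹ * v))
    (fun _ _ => hD.rep_mem _) (fun _ _ => hD.rep_mem _)
    (fun u hu => by simp only [hD.rep_mul_rep hN, inv_mul_cancel_left, hD.rep_of_mem hu])
    (fun v hv => by simp only [hD.rep_mul_rep hN, mul_inv_cancel_left, hD.rep_of_mem hv])
    (fun _ _ => rfl)

lemma eq_comp_rep (hD : IsFundDomain Γ D) {A : Type*} {z f : G → A}
    (hz : ∀ γ ∈ Γ, ∀ u ∈ D, z (γ * u) = f u) (g : G) : z g = f (hD.rep g) := by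
  obtain ⟨γ, hγ, hγg⟩ := hD.exists_mem_mul_rep g
  conv_lhs => rw [← hγg]
  exact hz γ hγ _ (hD.rep_mem g)

lemma apply_mul_left_eq (hD : IsFundDomain Γ D) {A : Type*} {z f : G → A}
    (hz : ∀ γ ∈ Γ, ∀ u ∈ D, z (γ * u) = f u) : ∀ γ ∈ Γ, ∀ g, z (γ * g) = z g := by
  intro γ hγ g
  rw [hD.eq_comp_rep hz, hD.eq_comp_rep hz, hD.rep_mul_left hγ]

end IsFundDomain

lemma isClopen_setOf_apply_ne {ι A : Type*} [TopologicalSpace A] [DiscreteTopology A]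
    (p : ι) (i : A) : IsClopen {z : ι → A | z p ≠ i} :=
  (isClopen_discrete {i}ᶜ).preimage (continuous_apply p)

lemma isClopen_cylinder {ι A : Type*} [TopologicalSpace A] [DiscreteTopology A]
    (F : Finset ι) (T : Set (F → A)) : IsClopen (cylinder F T : Set (ι → A)) :=
  (isClopen_discrete T).preimage (continuous_pi fun _ => continuous_apply _)

open scoped Classical in
lemma abs_indicator_cylinder_sub_le {ι A : Type*} (F : Finset ι) (T : Set (F → A))
    (x x' : ι → A) :
    |(cylinder F T).indicator (1 : (ι → A) → ℝ) x - (cylinder F T).indicator 1 x'| ≤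
      ∑ p ∈ F, if x p = x' p then 0 else 1 := by
  by_cases hF : ∀ p ∈ F, x p = x' p
  · have : F.restrict x = F.restrict x' := funext fun p => hF p p.2
    rw [Set.indicator_apply, Set.indicator_apply, mem_cylinder, mem_cylinder, this, Pi.one_apply,
      Pi.one_apply, sub_self, abs_zero]
    exact Finset.sum_nonneg fun _ _ => by split_ifs <;> norm_num
  · push Not at hF
    obtain ⟨p, hp, hne⟩ := hF
    calc _ ≤ (1 : ℝ) := by
          simp only [Set.indicator_apply]; split_ifs <;> norm_num
      _ ≤ _ := by
          simpa [hne] using Finset.single_le_sum (f := fun p => if x p = x' p then (0 : ℝ) else 1)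
            (fun _ _ => by split_ifs <;> norm_num) hp

section Visits

variable {G A : Type*} [Group G]

@[simp]
lemma shift_inv_apply (u : G) (x : G → A) (h : G) : shift u⁻¹ x h = x (u * h) := by
  simp [shift]

lemma continuous_shift [TopologicalSpace A] (g : G) :
    Continuous (shift g : (G → A) → G → A) :=
  continuous_pi fun _ => continuous_apply _

lemma measurable_shift [MeasurableSpace A] (g : G) :
    Measurable (shift g : (G → A) → G → A) :=
  measurable_pi_lambda _ fun _ => measurable_pi_apply _

/-- The number of `u ∈ D` for which the configuration `x`, seen from `u`, lies in `S`. -/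
noncomputable def visits (D : Finset G) (S : Set (G → A)) (x : G → A) : ℝ :=
  ∑ u ∈ D, S.indicator 1 (shift u⁻¹ x)

open scoped Classical in
/-- If `x` arises from `x'` by changing some of its symbols `i`, the count of a cylinder over
`F` moves by at most the number of changes seen through `F`, and the changes seen through
`p` are exactly the increase of the count of `{z | z p ≠ i}`. -/
lemma abs_visits_cylinder_sub_le (D F : Finset G) (T : Set (F → A)) {i : A} {x x' : G → A}
    (hx : ∀ h, x' h ≠ i → x h = x' h) :
    |visits D (cylinder F T) x - visits D (cylinder F T) x'| ≤
      ∑ p ∈ F, (visits D {z | z p ≠ i} x - visits D {z | z p ≠ i} x') := by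
  have hchange : ∀ u p, {z : G → A | z p ≠ i}.indicator 1 (shift u⁻¹ x) -
      {z : G → A | z p ≠ i}.indicator 1 (shift u⁻¹ x') =
        if x (u * p) = x' (u * p) then (0 : ℝ) else 1 := by
    intro u p
    have := hx (u * p)
    by_cases h1 : x' (u * p) = i <;> by_cases h2 : x (u * p) = i <;> simp_all
  calc _ = |∑ u ∈ D, ((cylinder F T).indicator 1 (shift u⁻¹ x) -
        (cylinder F T).indicator (1 : (G → A) → ℝ) (shift u⁻¹ x'))| := by
        rw [visits, visits, Finset.sum_sub_distrib]
    _ ≤ ∑ u ∈ D, ∑ p ∈ F, if x (u * p) = x' (u * p) then (0 : ℝ) else 1 :=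
        (Finset.abs_sum_le_sum_abs _ _).trans <| Finset.sum_le_sum fun u _ => by
          simpa using abs_indicator_cylinder_sub_le F T (shift u⁻¹ x) (shift u⁻¹ x')
    _ = _ := by
        rw [Finset.sum_comm]
        simp only [visits, ← Finset.sum_sub_distrib, hchange]

lemma visits_shift_of_periodic {Γ : Subgroup G} {D : Finset G} (hD : IsFundDomain Γ D)
    (hN : Γ.Normal) {y : G → A} (hy : ∀ γ ∈ Γ, ∀ h, y (γ * h) = y h) (S : Set (G → A))
    (g : G) : visits D S (shift g y) = visits D S y := by
  have hshift : ∀ u, shift u⁻¹ (shift g y) = shift (hD.rep (g⁻¹ * u))⁻¹ y := by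
    intro u
    ext h
    obtain ⟨γ, hγ, hγu⟩ := hD.exists_mem_mul_rep (g⁻¹ * u)
    rw [shift_inv_apply, shift_inv_apply, ← hy γ hγ, ← mul_assoc, hγu]
    simp [shift, mul_assoc]
  simp only [visits, hshift]
  exact hD.sum_rep_mul hN (fun v => S.indicator 1 (shift v⁻¹ y)) g⁻¹

lemma continuous_visits [TopologicalSpace A] (D : Finset G) {S : Set (G → A)}
    (hS : IsClopen S) : Continuous (visits D S) :=
  continuous_finsetSum _ fun u _ =>
    (hS.continuous_indicator continuous_const).comp (continuous_shift u⁻¹)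

lemma closure_orbit_subset_setOf_abs_visits_cylinder_sub_le [TopologicalSpace A]
    [DiscreteTopology A] {Γ : Subgroup G} {D : Finset G} (hD : IsFundDomain Γ D)
    (hN : Γ.Normal) {i : A} {y y' : G → A} (hy' : ∀ γ ∈ Γ, ∀ h, y' (γ * h) = y' h)
    (hy : ∀ h, y' h ≠ i → y h = y' h) (F : Finset G) (T : Set (F → A)) :
    closure {x | ∃ g : G, x = shift g y} ⊆
      {x | |visits D (cylinder F T) x - visits D (cylinder F T) y'| ≤
        ∑ p ∈ F, (visits D {z | z p ≠ i} x - visits D {z | z p ≠ i} y')} := by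
  refine closure_minimal ?_ (isClosed_le ?_ ?_)
  · rintro _ ⟨g, rfl⟩
    have := abs_visits_cylinder_sub_le D F T (x := shift g y) (x' := shift g y')
      fun h => hy (g⁻¹ * h)
    rwa [visits_shift_of_periodic hD hN hy', Finset.sum_congr rfl fun p _ => by
      rw [visits_shift_of_periodic hD hN hy']] at this
  · exact ((continuous_visits D (isClopen_cylinder F T)).sub continuous_const).abs
  · exact continuous_finsetSum _ fun p _ =>
      (continuous_visits D (isClopen_setOf_apply_ne p i)).sub continuous_const

end Visits

lemma measurableSet_setOf_apply_ne {ι A : Type*} [MeasurableSpace A]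
    [MeasurableSingletonClass A] (p : ι) (i : A) : MeasurableSet {z : ι → A | z p ≠ i} :=
  (measurableSet_singleton i).compl.preimage (measurable_pi_apply p)

section Measures

variable {G A : Type*} [Group G] [MeasurableSpace A]

lemma integrable_indicator_comp_shift {ρ : Measure (G → A)} [IsFiniteMeasure ρ]
    {S : Set (G → A)} (hS : MeasurableSet S) (g : G) :
    Integrable (fun x => S.indicator (1 : (G → A) → ℝ) (shift g x)) ρ :=
  ((integrable_const (1 : ℝ)).indicator hS).comp_measurable (μ := ρ) (measurable_shift g)

lemma integrable_visits {ρ : Measure (G → A)} [IsFiniteMeasure ρ] (D : Finset G)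
    {S : Set (G → A)} (hS : MeasurableSet S) : Integrable (visits D S) ρ :=
  integrable_finsetSum _ fun u _ => integrable_indicator_comp_shift hS u⁻¹

lemma integral_visits {ρ : Measure (G → A)} [IsFiniteMeasure ρ]
    (hρ : ∀ g : G, Measure.map (shift g) ρ = ρ) (D : Finset G) {S : Set (G → A)}
    (hS : MeasurableSet S) : ∫ x, visits D S x ∂ρ = D.card * ρ.real S := by
  have hterm : ∀ u : G, ∫ x, S.indicator 1 (shift u⁻¹ x) ∂ρ = ρ.real S := fun u => by
    rw [← integral_map (measurable_shift u⁻¹).aemeasurable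
      ((measurable_one.indicator hS).aestronglyMeasurable), hρ, integral_indicator_one hS]
  simp only [visits]
  rw [integral_finsetSum _ fun u _ => integrable_indicator_comp_shift hS u⁻¹,
    Finset.sum_congr rfl fun u _ => hterm u, Finset.sum_const, nsmul_eq_mul]

/-- The measure `μ_n` of the construction, equidistributed on the `D`-translates of `z`. -/
noncomputable def periodicMeasure (D : Finset G) (z : G → A) : Measure (G → A) :=
  ((D.card : ENNReal))⁻¹ • ∑ u ∈ D, Measure.dirac (shift u⁻¹ z)

lemma periodicMeasure_real_apply (D : Finset G) (z : G → A) {S : Set (G → A)}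
    (hS : MeasurableSet S) : (periodicMeasure D z).real S = (D.card : ℝ)⁻¹ * visits D S z := by
  have hind : ∀ u, S.indicator (1 : (G → A) → ENNReal) (shift u⁻¹ z) =
      ENNReal.ofReal (S.indicator 1 (shift u⁻¹ z)) :=
    fun u => by by_cases h : shift u⁻¹ z ∈ S <;> simp [h]
  simp [periodicMeasure, measureReal_def, visits, Measure.dirac_apply' _ hS, hind,
    ← ENNReal.ofReal_sum_of_nonneg, Finset.sum_nonneg, Set.indicator_nonneg]

lemma measure_setOf_apply_ne [MeasurableSingletonClass A] {ρ : Measure (G → A)}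
    (hρ : ∀ g : G, Measure.map (shift g) ρ = ρ) (p : G) (i : A) :
    ρ {z | z p ≠ i} = ρ {z | z 1 ≠ i} := by
  have : {z : G → A | z p ≠ i} = shift p⁻¹ ⁻¹' {z | z 1 ≠ i} := by ext; simp
  rw [this, ← Measure.map_apply (measurable_shift _) (measurableSet_setOf_apply_ne 1 i), hρ]

end Measures

lemma abs_real_cylinder_sub_periodicMeasure_le {G A : Type*} [Group G] [MeasurableSpace A]
    [TopologicalSpace A] [DiscreteTopology A] [MeasurableSingletonClass A]
    {Γ : Subgroup G} {D : Finset G}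
    (hD : IsFundDomain Γ D) (hN : Γ.Normal) {i : A} {y y' : G → A}
    (hy' : ∀ γ ∈ Γ, ∀ h, y' (γ * h) = y' h) (hy : ∀ h, y' h ≠ i → y h = y' h)
    {ρ : Measure (G → A)} [IsProbabilityMeasure ρ] (hρ : ∀ g : G, Measure.map (shift g) ρ = ρ)
    (hρy : ∀ᵐ x ∂ρ, x ∈ closure {x | ∃ g : G, x = shift g y})
    (F : Finset G) {T : Set (F → A)} (hT : MeasurableSet T) :
    |ρ.real (cylinder F T) - (periodicMeasure D y').real (cylinder F T)| ≤
      ∑ p ∈ F, (ρ.real {z | z p ≠ i} - (periodicMeasure D y').real {z | z p ≠ i}) := by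
  have hC : MeasurableSet (cylinder F T : Set (G → A)) := hT.cylinder F
  have hS := measurableSet_setOf_apply_ne (ι := G) (i := i)
  have hint : ∀ p, Integrable (fun x => visits D {z | z p ≠ i} x - visits D {z | z p ≠ i} y') ρ :=
    fun p => (integrable_visits D (hS p)).sub (integrable_const _)
  have hcard : (0 : ℝ) < D.card := by exact_mod_cast hD.nonempty.card_pos
  rw [periodicMeasure_real_apply D y' hC,
    Finset.sum_congr rfl fun p _ => by rw [periodicMeasure_real_apply D y' (hS p)],
    ← mul_le_mul_iff_of_pos_left hcard]
  calc _ = |∫ x, (visits D (cylinder F T) x - visits D (cylinder F T) y') ∂ρ| := by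
        rw [integral_sub (integrable_visits D hC) (integrable_const _), integral_visits hρ D hC,
          integral_const, probReal_univ, one_smul, ← abs_of_pos hcard, ← abs_mul, abs_of_pos hcard,
          mul_sub, mul_inv_cancel_left₀ hcard.ne']
    _ ≤ ∫ x, |visits D (cylinder F T) x - visits D (cylinder F T) y'| ∂ρ :=
        abs_integral_le_integral_abs
    _ ≤ ∫ x, ∑ p ∈ F, (visits D {z | z p ≠ i} x - visits D {z | z p ≠ i} y') ∂ρ :=
        integral_mono_ae ((integrable_visits D hC).sub (integrable_const _)).abs
          (integrable_finsetSum _ fun p _ => hint p)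
          (hρy.mono fun x hx =>
            closure_orbit_subset_setOf_abs_visits_cylinder_sub_le hD hN hy' hy F T hx)
    _ = _ := by
        rw [integral_finsetSum _ fun p _ => hint p, Finset.mul_sum]
        refine Finset.sum_congr rfl fun p _ => ?_
        rw [integral_sub (integrable_visits D (hS p)) (integrable_const _),
          integral_visits hρ D (hS p), integral_const, probReal_univ, one_smul, mul_sub,
          mul_inv_cancel_left₀ hcard.ne']

lemma tendsto_measureReal_of_isClopen {X : Type*} [TopologicalSpace X] [MeasurableSpace X]
    {μs : ℕ → Measure X} {ν : Measure X}
    (hμs : ∀ f : X → ℝ, Continuous f →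
      Tendsto (fun k => ∫ x, f x ∂(μs k)) atTop (𝓝 (∫ x, f x ∂ν)))
    {S : Set X} (hS : IsClopen S) (hSm : MeasurableSet S) :
    Tendsto (fun k => (μs k).real S) atTop (𝓝 (ν.real S)) := by
  simpa [integral_indicator_one hSm] using
    hμs (S.indicator 1) (hS.continuous_indicator continuous_const)

lemma sym_add_mul_self {r : ℕ} (hr : 1 < r) (i : Fin r) (k : ℕ) : sym hr (i + k * r) = i :=
  Fin.ext <| by simp [sym, Nat.mod_eq_of_lt i.isLt]

/-- Off the holes `J M`, the array `η` is `Γ M`-periodic, while on `J M` it carries the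
symbol `sym hr M`. -/
lemma apply_eq_of_periodic_apply_ne_sym {G : Type*} [Group G] {r : ℕ} (hr : 1 < r)
    (Γ : ℕ → Subgroup G) (hanti : Antitone Γ)
    (hnormal : ∀ n, (Γ n).Normal) (D : ℕ → Finset G) (J : ℕ → Set G)
    (hJ : ∀ m, 1 ≤ m → J m = (D m : Set G) \ ⋃ i < m, J i * ((Γ (i + 1) : Subgroup G) : Set G))
    (η : G → Fin r) (hηdef : ∀ (m : ℕ), ∀ h ∈ J m, ∀ g ∈ Γ (m + 1), η (h * g) = sym hr m)
    {M : ℕ} (hM : 1 ≤ M) (hD : IsFundDomain (Γ M) (D M)) {η' : G → Fin r}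
    (hη' : ∀ γ ∈ Γ M, ∀ u ∈ D M, η' (γ * u) = η u) (h : G) (hne : η' h ≠ sym hr M) :
    η h = η' h := by
  rw [hD.eq_comp_rep hη'] at hne ⊢
  obtain ⟨γ, hγ, hγh⟩ := hD.exists_mem_mul_rep h
  have hmem := hD.rep_mem h
  generalize hD.rep h = d at hne hγh hmem ⊢
  subst hγh
  have hdJ : d ∉ J M := fun hd => hne (by simpa using hηdef M d hd 1 (one_mem _))
  have hd : d ∈ ⋃ m < M, J m * (Γ (m + 1) : Set G) := by
    by_contra hd'
    exact hdJ (by rw [hJ M hM]; exact ⟨hmem, hd'⟩)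
  simp only [Set.mem_iUnion, Set.mem_mul, SetLike.mem_coe] at hd
  obtain ⟨m, hm, a, ha, δ, hδ, rfl⟩ := hd
  have hconj : a⁻¹ * γ * a ∈ Γ (m + 1) := by
    simpa using (hnormal (m + 1)).conj_mem γ (hanti (by omega : m + 1 ≤ M) hγ) a⁻¹
  rw [show γ * (a * δ) = a * (a⁻¹ * γ * a * δ) by group, hηdef m a ha _ (mul_mem hconj hδ),
    hηdef m a ha δ hδ]

theorem statement19_general {G : Type*} [Group G] [Countable G]
    {r : ℕ} (hr : 1 < r)
    -- the sequence of subgroups (with the convention `Γ 0 = G`, the data of the paper being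
    -- `Γ 1 > Γ 2 > ⋯`)
    (Γ : ℕ → Subgroup G) (hanti : StrictAnti Γ)
    (hnormal : ∀ n, (Γ n).Normal)
    -- the fundamental domains
    (D : ℕ → Finset G) (hfund : ∀ n, IsFundDomain (Γ n) (D n))
    -- the sets `J m`
    (J : ℕ → Set G)
    (hJ : ∀ m, 1 ≤ m → J m = (D m : Set G) \ ⋃ i < m, J i * ((Γ (i + 1) : Subgroup G) : Set G))
    -- the Toeplitz array `η`
    (η : G → Fin r)
    (hηdef : ∀ (m : ℕ), ∀ h ∈ J m, ∀ g ∈ Γ (m + 1), η (h * g) = sym hr m)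
    -- `X` is the orbit closure of `η`
    (X : Set (G → Fin r)) (hX : X = closure {y | ∃ g : G, y = shift g η})
    -- the `Γ n`-periodic configurations `η_n` and the periodic measures `μ_n`
    (ηn : ℕ → G → Fin r) (hηn : ∀ n, ∀ γ ∈ Γ n, ∀ g ∈ D n, ηn n (γ * g) = η g)
    (μseq : ℕ → Measure (G → Fin r))
    (hμseq : ∀ n, μseq n =
      (((D n).card : ENNReal))⁻¹ • ∑ u ∈ D n, Measure.dirac (shift u⁻¹ (ηn n)))
    -- for each symbol `j`, `ν j` is the weak-* limit of the subsequence `(μ_{j+kr-1})_k`,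
    -- an invariant probability measure supported on `X`
    (ν : Fin r → Measure (G → Fin r))
    (hν : ∀ j : Fin r, IsProbabilityMeasure (ν j) ∧
      (∀ g : G, Measure.map (shift g) (ν j) = ν j) ∧ (ν j) X = 1 ∧
      ∀ f : (G → Fin r) → ℝ, Continuous f →
        Tendsto (fun k => ∫ x, f x ∂(μseq ((j : ℕ) + (k + 1) * r))) atTop
          (nhds (∫ x, f x ∂(ν j)))) :
    -- any invariant probability measure agreeing with `ν i` on the symbol cylinders is `ν i`
    ∀ i : Fin r, ∀ μ : Measure (G → Fin r),
      IsProbabilityMeasure μ → (∀ g : G, Measure.map (shift g) μ = μ) → μ X = 1 →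
      (∀ j : Fin r, μ {x | x ∈ X ∧ x 1 = j} = (ν i) {x | x ∈ X ∧ x 1 = j}) →
      μ = ν i := by
  intro i μ hμ hμinv hμX hagree
  obtain ⟨hνprob, hνinv, hνX, hνlim⟩ := hν i
  have hXmeas : MeasurableSet X := hX ▸ isClosed_closure.measurableSet
  have hmass (ρ : Measure (G → Fin r)) [IsProbabilityMeasure ρ] (hρX : ρ X = 1) :
      ρ {x | x ∈ X ∧ x 1 = i} = ρ {x | x 1 = i} := by
    rw [show {x | x ∈ X ∧ x 1 = i} = {x | x 1 = i} ∩ X from Set.inter_comm _ _,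
      measure_inter_conull ((prob_compl_eq_zero_iff hXmeas).mpr hρX)]
  have hcoord (p : G) : μ.real {z | z p ≠ i} = (ν i).real {z | z p ≠ i} := by
    have hi : MeasurableSet {z : G → Fin r | z 1 = i} :=
      (measurableSet_singleton i).preimage (measurable_pi_apply 1)
    rw [measureReal_def, measureReal_def, measure_setOf_apply_ne hμinv,
      measure_setOf_apply_ne hνinv, ← Set.compl_ofPred, prob_compl_eq_one_sub hi,
      prob_compl_eq_one_sub hi, ← hmass μ hμX, ← hmass (ν i) hνX, hagree i]
  have hlim {S : Set (G → Fin r)} (hS : IsClopen S) :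
      Tendsto (fun k => (μseq (i + (k + 1) * r)).real S) atTop (𝓝 ((ν i).real S)) :=
    tendsto_measureReal_of_isClopen hνlim hS hS.isClosed.measurableSet
  refine ext_of_generate_finite _ generateFrom_measurableCylinders.symm
    isPiSystem_measurableCylinders (fun C hC => ?_) (by simp)
  obtain ⟨F, T, hT, rfl⟩ := (mem_measurableCylinders C).mp hC
  have hbound := le_of_tendsto_of_tendsto'
    (tendsto_const_nhds.sub (hlim (isClopen_cylinder F T))).abs
    (tendsto_finsetSum F fun p _ => tendsto_const_nhds.sub (hlim (isClopen_setOf_apply_ne p i)))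
    fun k => by
      rw [hμseq]
      exact abs_real_cylinder_sub_periodicMeasure_le (hfund _) (hnormal _)
        ((hfund _).apply_mul_left_eq (hηn _))
        (fun h hne => apply_eq_of_periodic_apply_ne_sym hr Γ hanti.antitone hnormal D J hJ η
          hηdef (le_add_left (Nat.mul_pos k.succ_pos (by omega))) (hfund _) (hηn _) h
          (by rwa [sym_add_mul_self]))
        hμinv (hX ▸ (mem_ae_iff_prob_eq_one hXmeas).mpr hμX) F hT
  simp only [hcoord, sub_self, Finset.sum_const_zero, abs_nonpos_iff, sub_eq_zero] at hbound
  exact (measureReal_eq_measureReal_iff).mp hbound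

theorem statement19 {G : Type*} [Group G] [Countable G]
    {r : ℕ} (hr : 1 < r)
    -- the sequence of subgroups (with the convention `Γ 0 = G`, the data of the paper being
    -- `Γ 1 > Γ 2 > ⋯`)
    (Γ : ℕ → Subgroup G) (hΓ0 : Γ 0 = ⊤) (hanti : StrictAnti Γ)
    (hnormal : ∀ n, (Γ n).Normal) (hfi : ∀ n, (Γ n).FiniteIndex)
    (hint : (⨅ n, Γ n) = ⊥) (hidx : ∀ n, 3 ≤ (Γ (n + 1)).relIndex (Γ n))
    -- the fundamental domains
    (D : ℕ → Finset G) (hD0 : D 0 = {1}) (hfund : ∀ n, IsFundDomain (Γ n) (D n))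
    (hone : ∀ n, (1 : G) ∈ D n) (hDmono : ∀ n, D n ⊆ D (n + 1))
    (hcoverD : ∀ g : G, ∃ n, g ∈ D n)
    (hdecomp : ∀ i j, i < j →
      (D j : Set G) = ⋃ v ∈ (D j : Set G) ∩ (Γ i : Set G), v • (D i : Set G))
    -- the sets `J m`
    (J : ℕ → Set G) (hJ0 : J 0 = {1})
    (hJ : ∀ m, 1 ≤ m → J m = (D m : Set G) \ ⋃ i < m, J i * ((Γ (i + 1) : Subgroup G) : Set G))
    -- the Toeplitz array `η`
    (η : G → Fin r)
    (hηdef : ∀ (m : ℕ), ∀ h ∈ J m, ∀ g ∈ Γ (m + 1), η (h * g) = sym hr m)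
    -- `X` is the orbit closure of `η`
    (X : Set (G → Fin r)) (hX : X = closure {y | ∃ g : G, y = shift g η})
    -- the `Γ n`-periodic configurations `η_n` and the periodic measures `μ_n`
    (ηn : ℕ → G → Fin r) (hηn : ∀ n, ∀ γ ∈ Γ n, ∀ g ∈ D n, ηn n (γ * g) = η g)
    (μseq : ℕ → Measure (G → Fin r))
    (hμseq : ∀ n, μseq n =
      (((D n).card : ENNReal))⁻¹ • ∑ u ∈ D n, Measure.dirac (shift u⁻¹ (ηn n)))
    -- first limit assumption: `lim_n lim_k ∏_{l=1}^{k-1} (1 - |D (n+l)|/|D (n+l+1)|) = 1`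
    (P : ℕ → ℝ)
    (hP : ∀ n, Tendsto
      (fun k => ∏ l ∈ Finset.Icc 1 (k - 1), (1 - ((D (n + l)).card : ℝ) / (D (n + l + 1)).card))
      atTop (nhds (P n)))
    (hP1 : Tendsto P atTop (nhds 1))
    -- second limit assumption: `lim_k ∑_{l=k+1}^∞ |D_{i+lr-1}|/|D_{i+lr}| = 0` for each `i`
    -- (the symbol `i ∈ {1,…,r}` corresponding to `i : Fin r` is `(i : ℕ) + 1`)
    (hsum : ∀ i : Fin r, Tendsto
      (fun k => ∑' l : ℕ, if l ≤ k then 0 else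
        ((D ((i : ℕ) + l * r)).card : ℝ) / (D ((i : ℕ) + 1 + l * r)).card)
      atTop (nhds 0))
    -- for each symbol `j`, `ν j` is the weak-* limit of the subsequence `(μ_{j+kr-1})_k`,
    -- an invariant probability measure supported on `X`
    (ν : Fin r → Measure (G → Fin r))
    (hν : ∀ j : Fin r, IsProbabilityMeasure (ν j) ∧
      (∀ g : G, Measure.map (shift g) (ν j) = ν j) ∧ (ν j) X = 1 ∧
      ∀ f : (G → Fin r) → ℝ, Continuous f →
        Tendsto (fun k => ∫ x, f x ∂(μseq ((j : ℕ) + (k + 1) * r))) atTop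
          (nhds (∫ x, f x ∂(ν j)))) :
    -- any invariant probability measure agreeing with `ν i` on the symbol cylinders is `ν i`
    ∀ i : Fin r, ∀ μ : Measure (G → Fin r),
      IsProbabilityMeasure μ → (∀ g : G, Measure.map (shift g) μ = μ) → μ X = 1 →
      (∀ j : Fin r, μ {x | x ∈ X ∧ x 1 = j} = (ν i) {x | x ∈ X ∧ x 1 = j}) →
      μ = ν i :=
  statement19_general hr Γ hanti hnormal D hfund J hJ η hηdef X hX ηn hηn μseq hμseq ν hν
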